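/- arXiv:2310.04011 — 2 statements merged into one kernel-verified Lean document; each statement's English description precedes it below -/
import Mathlib

section
/- The derivative formula for B-splines: for p ≥ 1 and ξ in the interior of a knot span, d/dξ N_{i,p}(ξ) = (p/(ξ_{i+p} − ξ_i)) N_{i,p−1}(ξ) − (p/(ξ_{i+p+1} − ξ_{i+1})) N_{i+1,p−1}(ξ), with terms having zero denominator interpreted as zero. -/
/-- Cox–de Boor recursion, with the `0/0 = 0` convention. -/
noncomputable def coxDeBoor (ξ : ℕ → ℝ) : ℕ → ℕ → ℝ → ℝ
  | 0, i, x => if ξ i ≤ x ∧ x < ξ (i + 1) then 1 else 0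
  | p + 1, i, x =>
      (if ξ (i + p + 1) = ξ i then 0
        else (x - ξ i) / (ξ (i + p + 1) - ξ i) * coxDeBoor ξ p i x) +
      (if ξ (i + p + 2) = ξ (i + 1) then 0
        else (ξ (i + p + 2) - x) / (ξ (i + p + 2) - ξ (i + 1)) * coxDeBoor ξ p (i + 1) x)

/-!
With Lean's `a / 0 = 0` the guards in the recursion disappear, and the claim for `p + 1` reads
`N_{i,p+1}' = (p + 1) Δ_{i,p}`, where
`Δ_{i,p} = N_{i,p}/(ξ_{i+p+1} - ξ_i) - N_{i+1,p}/(ξ_{i+p+2} - ξ_{i+1})` is `coxDeBoorDiff ξ p i`.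
The key fact is that `Δ` obeys the Cox–de Boor recursion itself, with the same weights: the
`N_{i+1,q}` terms match because, for a knot span of positive length, the two pairs of complementary
weights each sum to one (this is where monotonicity of the knots enters). Differentiating the
recursion by the product rule then gives the claim by induction on `p`, starting from the fact that
the degree-zero B-splines are locally constant inside a knot span.
-/

open Set

theorem Monotone.le_iff_le_of_mem_Ioo {α : Type*} [LinearOrder α] {f : ℕ → α} (hf : Monotone f)
    {j k : ℕ} {y : α} (hy : y ∈ Ioo (f j) (f (j + 1))) : f k ≤ y ↔ k ≤ j := by
  refine ⟨fun hk => ?_, fun hk => (hf hk).trans hy.1.le⟩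
  by_contra! hjk
  exact (hf hjk).not_gt (hk.trans_lt hy.2)

theorem ite_sub_eq_zero_div_mul (a b c d : ℝ) :
    (if a = b then 0 else c / (a - b) * d) = c / (a - b) * d := by
  split_ifs with h <;> simp [h]

theorem sub_div_add_sub_div_eq_one {a c : ℝ} (x : ℝ) (hac : a ≠ c) :
    (x - a) / (c - a) + (c - x) / (c - a) = 1 := by
  rw [← add_div, sub_add_sub_cancel', div_self (sub_ne_zero.2 hac.symm)]

section

variable {ξ : ℕ → ℝ}

-- The guards of the recursion are redundant: at a repeated knot the weight is already `_ / 0 = 0`.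
theorem coxDeBoor_succ_apply (p i : ℕ) (x : ℝ) :
    coxDeBoor ξ (p + 1) i x =
      (x - ξ i) / (ξ (i + p + 1) - ξ i) * coxDeBoor ξ p i x +
        (ξ (i + p + 2) - x) / (ξ (i + p + 2) - ξ (i + 1)) * coxDeBoor ξ p (i + 1) x := by
  simp only [coxDeBoor, ite_sub_eq_zero_div_mul]

theorem coxDeBoor_zero_of_mem_Ioo (hξ : Monotone ξ) {j : ℕ} {y : ℝ}
    (hy : y ∈ Ioo (ξ j) (ξ (j + 1))) (k : ℕ) : coxDeBoor ξ 0 k y = if k = j then 1 else 0 := by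
  have hlt : y < ξ (k + 1) ↔ j ≤ k := by rw [← not_le, hξ.le_iff_le_of_mem_Ioo hy]; omega
  simp only [coxDeBoor, hξ.le_iff_le_of_mem_Ioo hy, hlt, ← le_antisymm_iff]

noncomputable def coxDeBoorDiff (ξ : ℕ → ℝ) (p i : ℕ) (x : ℝ) : ℝ :=
  coxDeBoor ξ p i x / (ξ (i + p + 1) - ξ i) - coxDeBoor ξ p (i + 1) x / (ξ (i + p + 2) - ξ (i + 1))

theorem coxDeBoorDiff_succ (hξ : Monotone ξ) (q i : ℕ) (x : ℝ) :
    coxDeBoorDiff ξ (q + 1) i x =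
      (x - ξ i) / (ξ (i + (q + 1) + 1) - ξ i) * coxDeBoorDiff ξ q i x +
        (ξ (i + (q + 1) + 2) - x) / (ξ (i + (q + 1) + 2) - ξ (i + 1)) *
          coxDeBoorDiff ξ q (i + 1) x := by
  simp only [coxDeBoorDiff, coxDeBoor_succ_apply, show i + (q + 1) + 1 = i + q + 2 by omega,
    show i + (q + 1) + 2 = i + q + 3 by omega, show i + 1 + q + 1 = i + q + 2 by omega,
    show i + 1 + q + 2 = i + q + 3 by omega, show i + 1 + 1 = i + 2 by omega]
  rcases eq_or_ne (ξ (i + q + 2)) (ξ (i + 1)) with hcb | hcb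
  -- every term through `N_{i+1,q}` then carries the factor `1 / 0 = 0`
  · simp only [hcb, sub_self, div_zero]
    ring
  have hbc : ξ (i + 1) < ξ (i + q + 2) := (hξ (by omega)).lt_of_ne hcb.symm
  have hα := sub_div_add_sub_div_eq_one x ((hξ (by omega : i ≤ i + 1)).trans_lt hbc).ne
  have hβ := sub_div_add_sub_div_eq_one x (hbc.trans_le (hξ (by omega : i + q + 2 ≤ i + q + 3))).ne
  linear_combination coxDeBoor ξ q (i + 1) x / (ξ (i + q + 2) - ξ (i + 1)) * (hα - hβ)

theorem HasDerivAt.coxDeBoor_succ {p i : ℕ} {x D₀ D₁ : ℝ}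
    (h₀ : HasDerivAt (coxDeBoor ξ p i) D₀ x) (h₁ : HasDerivAt (coxDeBoor ξ p (i + 1)) D₁ x) :
    HasDerivAt (coxDeBoor ξ (p + 1) i)
      (coxDeBoorDiff ξ p i x + ((x - ξ i) / (ξ (i + p + 1) - ξ i) * D₀ +
        (ξ (i + p + 2) - x) / (ξ (i + p + 2) - ξ (i + 1)) * D₁)) x := by
  have hα := ((hasDerivAt_id' x).sub_const (ξ i)).div_const (ξ (i + p + 1) - ξ i)
  have hβ := ((hasDerivAt_id' x).const_sub (ξ (i + p + 2))).div_const (ξ (i + p + 2) - ξ (i + 1))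
  rw [show coxDeBoor ξ (p + 1) i = _ from funext (coxDeBoor_succ_apply p i)]
  refine ((hα.mul h₀).add (hβ.mul h₁)).congr_deriv ?_
  simp only [coxDeBoorDiff]
  ring

theorem hasDerivAt_coxDeBoor_zero (hξ : Monotone ξ) {j : ℕ} {x : ℝ}
    (hx : x ∈ Ioo (ξ j) (ξ (j + 1))) (i : ℕ) : HasDerivAt (coxDeBoor ξ 0 i) 0 x := by
  refine (hasDerivAt_const x (if i = j then (1 : ℝ) else 0)).congr_of_eventuallyEq ?_
  filter_upwards [Ioo_mem_nhds hx.1 hx.2] with y hy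
  exact coxDeBoor_zero_of_mem_Ioo hξ hy i

theorem hasDerivAt_coxDeBoor_succ (hξ : Monotone ξ) {j : ℕ} {x : ℝ}
    (hx : x ∈ Ioo (ξ j) (ξ (j + 1))) (p i : ℕ) :
    HasDerivAt (coxDeBoor ξ (p + 1) i) ((p + 1) * coxDeBoorDiff ξ p i x) x := by
  induction p generalizing i with
  | zero =>
    convert (hasDerivAt_coxDeBoor_zero hξ hx i).coxDeBoor_succ
      (hasDerivAt_coxDeBoor_zero hξ hx (i + 1)) using 1
    simp
  | succ p ih =>
    convert (ih i).coxDeBoor_succ (ih (i + 1)) using 1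
    push_cast
    linear_combination (p + 1 : ℝ) * coxDeBoorDiff_succ hξ p i x

end

theorem coxDeBoor_hasDerivAt_general (ξ : ℕ → ℝ) (hξ : Monotone ξ)
    (p : ℕ) (i : ℕ) (x : ℝ)
    (hx : ∃ j : ℕ, ξ j < x ∧ x < ξ (j + 1)) :
    HasDerivAt (fun y => coxDeBoor ξ p i y)
      ((if ξ (i + p) = ξ i then 0
          else (p : ℝ) / (ξ (i + p) - ξ i) * coxDeBoor ξ (p - 1) i x) -
        (if ξ (i + p + 1) = ξ (i + 1) then 0
          else (p : ℝ) / (ξ (i + p + 1) - ξ (i + 1)) * coxDeBoor ξ (p - 1) (i + 1) x)) x := by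
  obtain ⟨j, hx⟩ := hx
  simp only [ite_sub_eq_zero_div_mul]
  cases p with
  | zero => simpa using hasDerivAt_coxDeBoor_zero hξ hx i
  | succ p =>
    convert hasDerivAt_coxDeBoor_succ hξ hx p i using 1
    simp only [coxDeBoorDiff, Nat.add_sub_cancel, ← add_assoc]
    push_cast
    ring

/-- Derivative formula for B-splines on the interior of a knot span. -/
theorem coxDeBoor_hasDerivAt (ξ : ℕ → ℝ) (hξ : Monotone ξ)
    (p : ℕ) (hp : 1 ≤ p) (i : ℕ) (x : ℝ)
    (hx : ∃ j : ℕ, ξ j < x ∧ x < ξ (j + 1)) :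
    HasDerivAt (fun y => coxDeBoor ξ p i y)
      ((if ξ (i + p) = ξ i then 0
          else (p : ℝ) / (ξ (i + p) - ξ i) * coxDeBoor ξ (p - 1) i x) -
        (if ξ (i + p + 1) = ξ (i + 1) then 0
          else (p : ℝ) / (ξ (i + p + 1) - ξ (i + 1)) * coxDeBoor ξ (p - 1) (i + 1) x)) x :=
  coxDeBoor_hasDerivAt_general ξ hξ p i x hx
end

section
/- The n-point Gaussian quadrature rule on [−1, 1] is exact for all polynomials of degree at most 2n−1: if x₁, …, x_n are the roots of the n-th Legendre polynomial and w_i the corresponding weights, then ∫_{−1}^{1} q(x) dx = ∑_{i=1}^{n} w_i q(x_i) for every polynomial q with deg q ≤ 2n−1. -/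
open Polynomial intervalIntegral

/-- The degree-`n` Legendre polynomial via the Rodrigues formula. -/
noncomputable def legendrePoly (n : ℕ) : Polynomial ℝ :=
  Polynomial.C ((1 : ℝ) / (2 ^ n * n.factorial)) *
    Polynomial.derivative^[n] ((Polynomial.X ^ 2 - 1) ^ n)

/-!
Divide `q` by the degree-`n` polynomial `P` orthogonal to all polynomials of degree `< n`:
`q = P * d + r` with `deg d, deg r < n`. The term `P * d` integrates to zero and vanishes at the
roots of `P`, and the interpolatory rule built on `n` nodes integrates `r` exactly. That the
Legendre polynomial is such a `P` comes from `n` integrations by parts in the Rodrigues formula,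
the boundary terms vanishing because `±1` are roots of multiplicity `n` of `(X² - 1)ⁿ`.
-/

namespace Polynomial

lemma natDegree_iterate_derivative_eq {R : Type*} [Semiring R] [IsAddTorsionFree R]
    (p : R[X]) (k : ℕ) : (derivative^[k] p).natDegree = p.natDegree - k := by
  induction k with
  | zero => rfl
  | succ k ih => rw [Function.iterate_succ_apply', natDegree_derivative, ih, Nat.sub_sub]

lemma natDegree_div_eq {K : Type*} [Field K] (p : K[X]) {q : K[X]} (hq : q ≠ 0) :
    (p / q).natDegree = p.natDegree - q.natDegree := by
  have hc : (leadingCoeff q)⁻¹ ≠ 0 := inv_ne_zero (leadingCoeff_ne_zero.mpr hq)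
  rw [div_def, natDegree_C_mul hc, natDegree_divByMonic _ (monic_mul_leadingCoeff_inv hq),
    natDegree_mul_C hc]

lemma integral_derivative_mul_eq_neg {a b : ℝ} (p r : ℝ[X]) (ha : p.IsRoot a) (hb : p.IsRoot b) :
    ∫ t in a..b, (derivative p).eval t * r.eval t =
      -∫ t in a..b, p.eval t * (derivative r).eval t := by
  rw [integral_mul_deriv_eq_deriv_mul (fun t _ => p.hasDerivAt t) (fun t _ => r.hasDerivAt t)
    ((derivative p).continuous.intervalIntegrable a b)
    ((derivative r).continuous.intervalIntegrable a b), ha.eq_zero, hb.eq_zero]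
  ring

lemma integral_iterate_derivative_mul_eq {a b : ℝ} {m : ℕ} {p : ℝ[X]}
    (ha : (X - C a) ^ m ∣ p) (hb : (X - C b) ^ m ∣ p) (r : ℝ[X]) :
    ∫ t in a..b, (derivative^[m] p).eval t * r.eval t =
      (-1) ^ m * ∫ t in a..b, p.eval t * (derivative^[m] r).eval t := by
  induction m generalizing r with
  | zero => simp
  | succ m ih =>
    have isRoot_of_dvd {c : ℝ} (hc : (X - C c) ^ (m + 1) ∣ p) : (derivative^[m] p).IsRoot c := by
      have := pow_sub_dvd_iterate_derivative_of_pow_dvd m hc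
      rw [Nat.add_sub_cancel_left, pow_one] at this
      exact dvd_iff_isRoot.mp this
    rw [Function.iterate_succ_apply', integral_derivative_mul_eq_neg _ _ (isRoot_of_dvd ha)
      (isRoot_of_dvd hb), ih (dvd_trans (pow_dvd_pow _ m.le_succ) ha)
      (dvd_trans (pow_dvd_pow _ m.le_succ) hb), ← Function.iterate_succ_apply, pow_succ]
    ring

end Polynomial

namespace Lagrange

variable {ι : Type*} [DecidableEq ι] {s : Finset ι} {v : ι → ℝ}

lemma eval_basis (i : ι) (t : ℝ) :
    (Lagrange.basis s v i).eval t = ∏ j ∈ s.erase i, (t - v j) / (v i - v j) := by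
  simp only [Lagrange.basis, eval_prod, basisDivisor, eval_mul, eval_C, eval_sub, eval_X]
  exact Finset.prod_congr rfl fun j _ => by ring

lemma integral_eq_sum_integral_basis_mul (hv : Set.InjOn v s) {r : ℝ[X]}
    (hr : r.degree < s.card) (a b : ℝ) :
    ∫ t in a..b, r.eval t =
      ∑ i ∈ s, (∫ t in a..b, (Lagrange.basis s v i).eval t) * r.eval (v i) := by
  conv_lhs => rw [eq_interpolate hv hr, interpolate_apply]
  simp only [eval_finsetSum, eval_mul, eval_C]
  rw [integral_finsetSum (f := fun i t => r.eval (v i) * (Lagrange.basis s v i).eval t)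
    fun i _ => (continuous_const.mul (Lagrange.basis s v i).continuous).intervalIntegrable a b]
  exact Finset.sum_congr rfl fun i _ => by rw [integral_const_mul, mul_comm]

theorem integral_eq_sum_of_orthogonal (hv : Set.InjOn v s) {a b : ℝ} {P : ℝ[X]}
    (hP : P.natDegree = s.card)
    (horth : ∀ d : ℝ[X], d.natDegree < s.card → ∫ t in a..b, P.eval t * d.eval t = 0)
    (hroot : ∀ i ∈ s, P.IsRoot (v i)) {q : ℝ[X]} (hq : q.natDegree < 2 * s.card) :
    ∫ t in a..b, q.eval t =
      ∑ i ∈ s, (∫ t in a..b, (Lagrange.basis s v i).eval t) * q.eval (v i) := by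
  have hP0 : P ≠ 0 := by rintro rfl; simp at hP; omega
  have hdiv : q = q % P + P * (q / P) := (EuclideanDomain.mod_add_div q P).symm
  have hrem : (q % P).degree < s.card := by
    simpa [degree_eq_natDegree hP0, hP] using degree_mod_lt q hP0
  have hquot : (q / P).natDegree < s.card := by rw [natDegree_div_eq q hP0, hP]; omega
  calc ∫ t in a..b, q.eval t
      = (∫ t in a..b, (q % P).eval t) + ∫ t in a..b, P.eval t * (q / P).eval t := by
        rw [← integral_add (g := fun t => P.eval t * (q / P).eval t)
          ((q % P).continuous.intervalIntegrable a b)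
          ((P.continuous.mul (q / P).continuous).intervalIntegrable a b)]
        exact integral_congr fun t _ => by conv_lhs => rw [hdiv]; simp
    _ = ∑ i ∈ s, (∫ t in a..b, (Lagrange.basis s v i).eval t) * (q % P).eval (v i) := by
        rw [horth _ hquot, add_zero, integral_eq_sum_integral_basis_mul hv hrem]
    _ = _ := Finset.sum_congr rfl fun i hi => by
        conv_rhs => rw [hdiv, eval_add, eval_mul, (hroot i hi).eq_zero, zero_mul, add_zero]

end Lagrange

lemma X_sq_sub_one_eq_mul : (X ^ 2 - 1 : ℝ[X]) = (X - C 1) * (X - C (-1)) := by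
  simp only [map_one, map_neg]; ring

lemma natDegree_legendrePoly (n : ℕ) : (legendrePoly n).natDegree = n := by
  have hF : ((X ^ 2 - 1 : ℝ[X]) ^ n).natDegree = 2 * n := by
    rw [natDegree_pow, show (X ^ 2 - 1 : ℝ[X]) = X ^ 2 - C 1 by simp, natDegree_X_pow_sub_C,
      mul_comm]
  rw [legendrePoly, natDegree_C_mul (by positivity), natDegree_iterate_derivative_eq, hF]
  omega

lemma integral_legendrePoly_mul_eq_zero (n : ℕ) {d : ℝ[X]} (hd : d.natDegree < n) :
    ∫ t in (-1 : ℝ)..1, (legendrePoly n).eval t * d.eval t = 0 := by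
  have h1 : (X - C 1) ^ n ∣ (X ^ 2 - 1 : ℝ[X]) ^ n := by
    rw [X_sq_sub_one_eq_mul, mul_pow]; exact dvd_mul_right _ _
  have h2 : (X - C (-1)) ^ n ∣ (X ^ 2 - 1 : ℝ[X]) ^ n := by
    rw [X_sq_sub_one_eq_mul, mul_pow]; exact dvd_mul_left _ _
  simp only [legendrePoly, eval_mul, eval_C, mul_assoc]
  rw [integral_const_mul, integral_iterate_derivative_mul_eq h2 h1, iterate_derivative_eq_zero hd]
  simp

theorem gauss_legendre_exactness_general (n : ℕ) (hn : 0 < n)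
    (x : Fin n → ℝ) (hx : Function.Injective x)
    (hroot : ∀ i, (legendrePoly n).eval (x i) = 0)
    (w : Fin n → ℝ)
    (hw : ∀ i, w i = ∫ t in (-1 : ℝ)..1,
      ∏ j ∈ Finset.univ.erase i, (t - x j) / (x i - x j)) :
    ∀ q : Polynomial ℝ, q.natDegree ≤ 2 * n - 1 →
      (∫ t in (-1 : ℝ)..1, q.eval t) = ∑ i, w i * q.eval (x i) := by
  intro q hq
  have hcard : (Finset.univ : Finset (Fin n)).card = n := Finset.card_fin n
  rw [Lagrange.integral_eq_sum_of_orthogonal hx.injOn (P := legendrePoly n)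
    (by rw [hcard, natDegree_legendrePoly])
    (fun d hd => integral_legendrePoly_mul_eq_zero n (hcard ▸ hd))
    (fun i _ => hroot i) (by omega)]
  simp only [Lagrange.eval_basis, hw]

/-- `n`-point Gauss–Legendre quadrature is exact on polynomials of degree ≤ 2n − 1. -/
theorem gauss_legendre_exactness (n : ℕ) (hn : 0 < n)
    (x : Fin n → ℝ) (hx : Function.Injective x)
    (hroot : ∀ i, (legendrePoly n).eval (x i) = 0)
    (hmem : ∀ i, x i ∈ Set.Ioo (-1 : ℝ) 1)
    (w : Fin n → ℝ)
    (hw : ∀ i, w i = ∫ t in (-1 : ℝ)..1,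
      ∏ j ∈ Finset.univ.erase i, (t - x j) / (x i - x j)) :
    ∀ q : Polynomial ℝ, q.natDegree ≤ 2 * n - 1 →
      (∫ t in (-1 : ℝ)..1, q.eval t) = ∑ i, w i * q.eval (x i) :=
  gauss_legendre_exactness_general n hn x hx hroot w hw
end
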